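/- For all s > 0 one has ½·h(s)·s ≤ H(s) ≤ h(s)·s, where h(u) = -u·log(u²) for 0 ≤ u ≤ e⁻¹, h(u) = 2/e for u > e⁻¹, and H(u) = ∫₀ᵘ h. -/

import Mathlib

noncomputable def h (u : ℝ) : ℝ :=
  if |u| ≤ (Real.exp 1)⁻¹ then -u * Real.log (u ^ 2)
  else if u > (Real.exp 1)⁻¹ then 2 / Real.exp 1
  else -(2 / Real.exp 1)

noncomputable def H (u : ℝ) : ℝ :=
  if |u| ≤ (Real.exp 1)⁻¹ then
    -(1 / 2) * u ^ 2 * Real.log (u ^ 2) + (1 / 2) * u ^ 2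
  else (2 / Real.exp 1) * |u| - 1 / (2 * Real.exp 1 ^ 2)

/-! On `(0, e⁻¹]`, with `L = -log (s²) ≥ 2`, we have `h s * s = L s²` and `H s = (L + 1) s² / 2`,
which lies between `L s² / 2` and `L s²` because `L ≥ 1`. On `(e⁻¹, ∞)` we have `h s * s = 2s/e`
and `H s = 2s/e - 1/(2e²)`, which is at least `s/e` because `s ≥ 1/(2e)`. -/

open Real

lemma h_of_abs_le {u : ℝ} (hu : |u| ≤ (exp 1)⁻¹) : h u = -u * log (u ^ 2) :=
  if_pos hu

lemma H_of_abs_le {u : ℝ} (hu : |u| ≤ (exp 1)⁻¹) :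
    H u = -(1 / 2) * u ^ 2 * log (u ^ 2) + (1 / 2) * u ^ 2 :=
  if_pos hu

lemma h_of_inv_exp_lt {u : ℝ} (hu : (exp 1)⁻¹ < u) : h u = 2 / exp 1 := by
  have hnot : ¬ |u| ≤ (exp 1)⁻¹ := fun habs => hu.not_ge ((le_abs_self u).trans habs)
  rw [h, if_neg hnot, if_pos hu]

lemma H_of_inv_exp_lt {u : ℝ} (hu : (exp 1)⁻¹ < u) :
    H u = 2 / exp 1 * u - 1 / (2 * exp 1 ^ 2) := by
  have hpos : 0 < u := (inv_pos.mpr (exp_pos 1)).trans hu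
  have hnot : ¬ |u| ≤ (exp 1)⁻¹ := fun habs => hu.not_ge ((le_abs_self u).trans habs)
  rw [H, if_neg hnot, abs_of_pos hpos]

lemma two_le_neg_log_sq {s : ℝ} (hs : 0 < s) (hse : s ≤ (exp 1)⁻¹) : 2 ≤ -log (s ^ 2) := by
  have hlog : log s ≤ -1 := by
    calc log s ≤ log (exp 1)⁻¹ := log_le_log hs hse
      _ = -1 := by rw [log_inv, log_exp]
  rw [log_pow]
  push_cast
  linarith

lemma H_between_of_le_inv_exp {s : ℝ} (hs : 0 < s) (hse : s ≤ (exp 1)⁻¹) :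
    (1 / 2) * h s * s ≤ H s ∧ H s ≤ h s * s := by
  have habs : |s| ≤ (exp 1)⁻¹ := by rwa [abs_of_pos hs]
  rw [h_of_abs_le habs, H_of_abs_le habs]
  have hL := two_le_neg_log_sq hs hse
  have hsq : 0 < s ^ 2 := by positivity
  constructor <;> nlinarith

lemma H_between_of_inv_exp_lt {s : ℝ} (hse : (exp 1)⁻¹ < s) :
    (1 / 2) * h s * s ≤ H s ∧ H s ≤ h s * s := by
  rw [h_of_inv_exp_lt hse, H_of_inv_exp_lt hse]
  have he := exp_pos 1
  have hinv : 1 / (2 * exp 1 ^ 2) ≤ s / exp 1 := by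
    rw [div_le_div_iff₀ (by positivity) he]
    have : (exp 1)⁻¹ * exp 1 = 1 := inv_mul_cancel₀ he.ne'
    nlinarith
  have hrhs : 0 < 1 / (2 * exp 1 ^ 2) := by positivity
  constructor
  · linarith [show (1 : ℝ) / 2 * (2 / exp 1) * s = s / exp 1 by ring]
  · linarith

theorem H_between :
    ∀ s > (0 : ℝ), (1 / 2) * h s * s ≤ H s ∧ H s ≤ h s * s := by
  intro s hs
  rcases le_or_gt s (exp 1)⁻¹ with hse | hse
  · exact H_between_of_le_inv_exp hs hse
  · exact H_between_of_inv_exp_lt hse
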